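/- Let Q(x) = ∫ₓ^∞ (1/√(2π)) e^{−t²/2} dt, fix ω̂ ∈ ℝ, and set a = max{ e^{−ω̂²/2} / (√(2π) Q(ω̂)), ω̂ } and b = (1/(√(2π) a)) · e^{aω̂ − ω̂²/2}. Define g(ω) = Q(ω) − b e^{−aω} − (Q(ω̂) − b e^{−aω̂}). Then g is differentiable with g′(ω) = −(1/√(2π)) e^{−ω²/2} + a b e^{−aω}, and g′(ω) ≥ 0 if and only if (ω − ω̂)(ω − (2a − ω̂)) ≥ 0; since a ≥ ω̂, the two roots satisfy ω̂ ≤ 2a − ω̂, so g is increasing on (−∞, ω̂], decreasing on [ω̂, 2a − ω̂], and increasing on [2a − ω̂, ∞). -/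

import Mathlib

/-- The Gaussian Q-function `Q(x) = ∫ₓ^∞ (1/√(2π)) e^{−t²/2} dt`. -/
noncomputable def gaussianQ (x : ℝ) : ℝ :=
  ∫ t in Set.Ioi x, (Real.sqrt (2 * Real.pi))⁻¹ * Real.exp (-t ^ 2 / 2)

/-- `a(u) = max{ e^{−u²/2} / (√(2π) Q(u)), u }`. -/
noncomputable def aQ (u : ℝ) : ℝ :=
  max (Real.exp (-u ^ 2 / 2) / (Real.sqrt (2 * Real.pi) * gaussianQ u)) u

/-- `b(u) = (1/(√(2π) a(u))) · e^{a(u)·u − u²/2}`. -/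
noncomputable def bQ (u : ℝ) : ℝ :=
  (Real.sqrt (2 * Real.pi) * aQ u)⁻¹ * Real.exp (aQ u * u - u ^ 2 / 2)

/-- `c(u) = Q(u) − b(u) e^{−a(u)·u}`. -/
noncomputable def cQ (u : ℝ) : ℝ := gaussianQ u - bQ u * Real.exp (-aQ u * u)

/-!
`Q` is the tail integral of the standard normal density `φ`, so `Q' = -φ`. By the choice of `b`,
`a b e^{-aω} = (2π)^{-1/2} e^{aω̂ - ω̂²/2 - aω}`, hence `g'(ω) ≥ 0` exactly when
`aω̂ - ω̂²/2 - aω ≥ -ω²/2`. The difference of the two exponents is `(ω - ω̂)(ω - (2a - ω̂))/2`, a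
quadratic with roots `ω̂ ≤ 2a - ω̂` (as `a ≥ ω̂` by the `max`), and the monotonicity pattern
follows from the mean value theorem.
-/

open Real MeasureTheory Set ProbabilityTheory

theorem hasDerivAt_integral_Ioi {E : Type*} [NormedAddCommGroup E] [NormedSpace ℝ E]
    [CompleteSpace E] {f : ℝ → E} (hf : Integrable f) {x : ℝ} (hfx : ContinuousAt f x) :
    HasDerivAt (fun y => ∫ t in Ioi y, f t) (-f x) x := by
  have hsplit : (fun y => ∫ t in Ioi y, f t) = fun y => (∫ t in Ioi 0, f t) - ∫ t in 0..y, f t := by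
    funext y
    rw [← intervalIntegral.integral_Ioi_sub_Ioi' hf.integrableOn hf.integrableOn]
    abel
  rw [hsplit]
  exact (intervalIntegral.integral_hasDerivAt_right hf.intervalIntegrable
    hf.aestronglyMeasurable.stronglyMeasurableAtFilter hfx).const_sub _

theorem MonotoneOn.of_hasDerivAt_of_nonneg {D : Set ℝ} (hD : Convex ℝ D) {f f' : ℝ → ℝ}
    (hf : ∀ x, HasDerivAt f (f' x) x) (hf' : ∀ x ∈ interior D, 0 ≤ f' x) : MonotoneOn f D :=
  monotoneOn_of_hasDerivWithinAt_nonneg hD (fun x _ => (hf x).continuousAt.continuousWithinAt)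
    (fun x _ => (hf x).hasDerivWithinAt) hf'

theorem AntitoneOn.of_hasDerivAt_of_nonpos {D : Set ℝ} (hD : Convex ℝ D) {f f' : ℝ → ℝ}
    (hf : ∀ x, HasDerivAt f (f' x) x) (hf' : ∀ x ∈ interior D, f' x ≤ 0) : AntitoneOn f D :=
  antitoneOn_of_hasDerivWithinAt_nonpos hD (fun x _ => (hf x).continuousAt.continuousWithinAt)
    (fun x _ => (hf x).hasDerivWithinAt) hf'

theorem gaussianPDFReal_zero_one (t : ℝ) :
    gaussianPDFReal 0 1 t = (√(2 * π))⁻¹ * rexp (-t ^ 2 / 2) := by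
  simp [gaussianPDFReal]

theorem continuous_gaussianPDFReal_zero_one : Continuous (gaussianPDFReal 0 1) := by
  simp_rw [funext gaussianPDFReal_zero_one]
  fun_prop

theorem gaussianQ_eq_integral_gaussianPDFReal (x : ℝ) :
    gaussianQ x = ∫ t in Ioi x, gaussianPDFReal 0 1 t := by
  simp only [gaussianQ, gaussianPDFReal_zero_one]

theorem hasDerivAt_gaussianQ (x : ℝ) : HasDerivAt gaussianQ (-gaussianPDFReal 0 1 x) x := by
  simp_rw [funext gaussianQ_eq_integral_gaussianPDFReal]
  exact hasDerivAt_integral_Ioi (integrable_gaussianPDFReal 0 1)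
    continuous_gaussianPDFReal_zero_one.continuousAt

theorem gaussianQ_pos (x : ℝ) : 0 < gaussianQ x := by
  have hpos (t : ℝ) : 0 < gaussianPDFReal 0 1 t := gaussianPDFReal_pos 0 1 t one_ne_zero
  rw [gaussianQ_eq_integral_gaussianPDFReal, setIntegral_pos_iff_support_of_nonneg_ae
    (Filter.Eventually.of_forall fun t => (hpos t).le) (integrable_gaussianPDFReal 0 1).integrableOn]
  simp [Function.support, (hpos _).ne']

theorem aQ_pos (u : ℝ) : 0 < aQ u :=
  (div_pos (exp_pos _) (mul_pos (sqrt_pos.mpr (by positivity)) (gaussianQ_pos u))).trans_le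
    (le_max_left _ _)

theorem le_aQ (u : ℝ) : u ≤ aQ u := le_max_right _ _

theorem aQ_mul_bQ (u : ℝ) : aQ u * bQ u = (√(2 * π))⁻¹ * rexp (aQ u * u - u ^ 2 / 2) := by
  have := (aQ_pos u).ne'
  rw [bQ, mul_inv]
  field_simp

noncomputable def qGap (u ω : ℝ) : ℝ := gaussianQ ω - bQ u * rexp (-aQ u * ω) - cQ u

noncomputable def qGapDeriv (u ω : ℝ) : ℝ :=
  -(√(2 * π))⁻¹ * rexp (-ω ^ 2 / 2) + aQ u * bQ u * rexp (-aQ u * ω)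

theorem hasDerivAt_qGap (u ω : ℝ) : HasDerivAt (qGap u) (qGapDeriv u ω) ω := by
  have hexp : HasDerivAt (fun ω => rexp (-aQ u * ω)) (rexp (-aQ u * ω) * -aQ u) ω := by
    simpa using ((hasDerivAt_id ω).const_mul (-aQ u)).exp
  refine (((hasDerivAt_gaussianQ ω).sub (hexp.const_mul (bQ u))).sub_const (cQ u)).congr_deriv ?_
  rw [qGapDeriv, gaussianPDFReal_zero_one]
  ring

theorem qGapDeriv_eq (u ω : ℝ) :
    qGapDeriv u ω = (√(2 * π))⁻¹ * (rexp (aQ u * u - u ^ 2 / 2 - aQ u * ω) - rexp (-ω ^ 2 / 2)) := by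
  rw [qGapDeriv, aQ_mul_bQ, sub_eq_add_neg _ (aQ u * ω), exp_add, ← neg_mul]
  ring

theorem qGapDeriv_nonneg_iff (u ω : ℝ) :
    0 ≤ qGapDeriv u ω ↔ 0 ≤ (ω - u) * (ω - (2 * aQ u - u)) := by
  have hc : 0 < (√(2 * π))⁻¹ := inv_pos.mpr (sqrt_pos.mpr (by positivity))
  have hexponents : 2 * (aQ u * u - u ^ 2 / 2 - aQ u * ω - -ω ^ 2 / 2) =
      (ω - u) * (ω - (2 * aQ u - u)) := by
    ring
  rw [qGapDeriv_eq, mul_nonneg_iff_of_pos_left hc, sub_nonneg, exp_le_exp, ← sub_nonneg,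
    ← mul_nonneg_iff_of_pos_left two_pos, hexponents]

theorem monotoneOn_qGap_Iic (u : ℝ) : MonotoneOn (qGap u) (Iic u) := by
  refine MonotoneOn.of_hasDerivAt_of_nonneg (convex_Iic u) (hasDerivAt_qGap u) fun ω hω => ?_
  rw [interior_Iic, mem_Iio] at hω
  exact (qGapDeriv_nonneg_iff u ω).2
    (mul_nonneg_of_nonpos_of_nonpos (by linarith) (by linarith [le_aQ u]))

theorem antitoneOn_qGap_Icc (u : ℝ) : AntitoneOn (qGap u) (Icc u (2 * aQ u - u)) := by
  refine AntitoneOn.of_hasDerivAt_of_nonpos (convex_Icc _ _) (hasDerivAt_qGap u) fun ω hω => ?_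
  rw [interior_Icc, mem_Ioo] at hω
  have hneg : (ω - u) * (ω - (2 * aQ u - u)) < 0 := mul_neg_of_pos_of_neg (by linarith) (by linarith)
  exact (not_le.mp fun h => ((qGapDeriv_nonneg_iff u ω).1 h).not_gt hneg).le

theorem monotoneOn_qGap_Ici (u : ℝ) : MonotoneOn (qGap u) (Ici (2 * aQ u - u)) := by
  refine MonotoneOn.of_hasDerivAt_of_nonneg (convex_Ici _) (hasDerivAt_qGap u) fun ω hω => ?_
  rw [interior_Ici, mem_Ioi] at hω
  exact (qGapDeriv_nonneg_iff u ω).2 (mul_nonneg (by linarith [le_aQ u]) (by linarith))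

/-- key step in the proof of the paper's Lemma 3: with
`a = a(ω̂)`, `b = b(ω̂)` and `g(ω) = Q(ω) − b e^{−aω} − (Q(ω̂) − b e^{−aω̂})`,
`g` has derivative `g′(ω) = −(1/√(2π)) e^{−ω²/2} + a b e^{−aω}`;
`g′(ω) ≥ 0 ↔ (ω − ω̂)(ω − (2a − ω̂)) ≥ 0`; since `a ≥ ω̂` we have `ω̂ ≤ 2a − ω̂`,
and `g` is increasing on `(−∞, ω̂]`, decreasing on `[ω̂, 2a − ω̂]`, and increasing
on `[2a − ω̂, ∞)`. -/
theorem statement6 (w0 : ℝ) :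
    (∀ ω : ℝ,
      HasDerivAt
        (fun ω => gaussianQ ω - bQ w0 * Real.exp (-aQ w0 * ω) -
          (gaussianQ w0 - bQ w0 * Real.exp (-aQ w0 * w0)))
        (-(Real.sqrt (2 * Real.pi))⁻¹ * Real.exp (-ω ^ 2 / 2) +
          aQ w0 * bQ w0 * Real.exp (-aQ w0 * ω)) ω) ∧
    (∀ ω : ℝ,
      0 ≤ -(Real.sqrt (2 * Real.pi))⁻¹ * Real.exp (-ω ^ 2 / 2) +
          aQ w0 * bQ w0 * Real.exp (-aQ w0 * ω) ↔
      0 ≤ (ω - w0) * (ω - (2 * aQ w0 - w0))) ∧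
    w0 ≤ aQ w0 ∧ w0 ≤ 2 * aQ w0 - w0 ∧
    MonotoneOn
      (fun ω => gaussianQ ω - bQ w0 * Real.exp (-aQ w0 * ω) -
        (gaussianQ w0 - bQ w0 * Real.exp (-aQ w0 * w0))) (Set.Iic w0) ∧
    AntitoneOn
      (fun ω => gaussianQ ω - bQ w0 * Real.exp (-aQ w0 * ω) -
        (gaussianQ w0 - bQ w0 * Real.exp (-aQ w0 * w0))) (Set.Icc w0 (2 * aQ w0 - w0)) ∧
    MonotoneOn
      (fun ω => gaussianQ ω - bQ w0 * Real.exp (-aQ w0 * ω) -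
        (gaussianQ w0 - bQ w0 * Real.exp (-aQ w0 * w0))) (Set.Ici (2 * aQ w0 - w0)) :=
  ⟨hasDerivAt_qGap w0, qGapDeriv_nonneg_iff w0, le_aQ w0, by linarith [le_aQ w0],
    monotoneOn_qGap_Iic w0, antitoneOn_qGap_Icc w0, monotoneOn_qGap_Ici w0⟩
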